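/- For every real λ, D(λ) = Σ_{j=6}^∞ (d_j/j!)·λ^j, where d_j = 2^{j+1}(j−2) − j(j−1)(j−2)(j−3) − 4j(j−1) + 8; moreover d_j > 0 for every integer j ≥ 6. -/

import Mathlib

/-- `D(λ) = -4 - 4λ - (λ⁴ + 4λ² - 8)e^λ + (4λ - 4)e^{2λ}`. -/
noncomputable def D (lam : ℝ) : ℝ :=
  -4 - 4 * lam - (lam ^ 4 + 4 * lam ^ 2 - 8) * Real.exp lam +
    (4 * lam - 4) * Real.exp (2 * lam)

/-- `d_j = 2^{j+1}(j-2) - j(j-1)(j-2)(j-3) - 4j(j-1) + 8`. -/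
noncomputable def d (j : ℕ) : ℝ :=
  2 ^ (j + 1) * ((j : ℝ) - 2) -
    (j : ℝ) * ((j : ℝ) - 1) * ((j : ℝ) - 2) * ((j : ℝ) - 3) -
    4 * (j : ℝ) * ((j : ℝ) - 1) + 8

lemma exp_hasSum (x : ℝ) : HasSum (fun n : ℕ => x ^ n / (Nat.factorial n : ℝ)) (Real.exp x) := by
  rw [Real.exp_eq_exp_ℝ]
  exact NormedSpace.expSeries_div_hasSum_exp x

lemma shift_hasSum (g : ℕ → ℝ) (k : ℕ) (a : ℝ)
    (h : HasSum (fun n => g (n + k)) a) (h0 : ∀ i < k, g i = 0) : HasSum g a := by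
  have := (hasSum_nat_add_iff (f := g) k).mp h
  simpa [Finset.sum_eq_zero (fun i hi => h0 i (Finset.mem_range.mp hi))] using this

lemma fact_ne (n : ℕ) : (Nat.factorial n : ℝ) ≠ 0 := by positivity

lemma hs2 (lam : ℝ) :
    HasSum (fun n : ℕ => (n:ℝ) * ((n:ℝ)-1) * lam ^ n / (Nat.factorial n : ℝ))
      (lam ^ 2 * Real.exp lam) := by
  apply shift_hasSum _ 2
  · have h := (exp_hasSum lam).mul_left (lam ^ 2)
    convert h using 1; rfl; funext n
    have hf : (Nat.factorial (n+2) : ℝ) = ((n:ℝ)+2) * ((n:ℝ)+1) * (Nat.factorial n : ℝ) := by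
      push_cast [Nat.factorial_succ]; ring
    rw [hf]; push_cast; field_simp; ring
  · intro i hi; interval_cases i <;> norm_num

lemma hs4 (lam : ℝ) :
    HasSum (fun n : ℕ =>
        (n:ℝ) * ((n:ℝ)-1) * ((n:ℝ)-2) * ((n:ℝ)-3) * lam ^ n / (Nat.factorial n : ℝ))
      (lam ^ 4 * Real.exp lam) := by
  apply shift_hasSum _ 4
  · have h := (exp_hasSum lam).mul_left (lam ^ 4)
    convert h using 1; rfl; funext n
    have hf : (Nat.factorial (n+4) : ℝ)
        = ((n:ℝ)+4) * ((n:ℝ)+3) * ((n:ℝ)+2) * ((n:ℝ)+1) * (Nat.factorial n : ℝ) := by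
      push_cast [Nat.factorial_succ]; ring
    rw [hf]; push_cast; field_simp; ring
  · intro i hi; interval_cases i <;> norm_num

lemma hs1 (lam : ℝ) :
    HasSum (fun n : ℕ => (n:ℝ) * 2 ^ n * lam ^ n / (2 * (Nat.factorial n : ℝ)))
      (lam * Real.exp (2 * lam)) := by
  apply shift_hasSum _ 1
  · have h := (exp_hasSum (2 * lam)).mul_left lam
    convert h using 1; rfl; funext n
    have hf : (Nat.factorial (n+1) : ℝ) = ((n:ℝ)+1) * (Nat.factorial n : ℝ) := by
      push_cast [Nat.factorial_succ]; ring
    rw [hf, mul_pow]; push_cast; field_simp; ring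
  · intro i hi; interval_cases i; norm_num

lemma main_hasSum (lam : ℝ) :
    HasSum (fun n : ℕ => d n / (Nat.factorial n : ℝ) * lam ^ n)
      (8 * Real.exp lam - 4 * (lam ^ 2 * Real.exp lam) - lam ^ 4 * Real.exp lam
        + 4 * (lam * Real.exp (2 * lam)) - 4 * Real.exp (2 * lam)) := by
  have H := (((((exp_hasSum lam).mul_left 8).sub ((hs2 lam).mul_left 4)).sub
      (hs4 lam)).add ((hs1 lam).mul_left 4)).sub ((exp_hasSum (2 * lam)).mul_left 4)
  convert H using 1; rfl; funext n
  have hne := fact_ne n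
  unfold d
  rw [mul_pow]
  field_simp
  ring

lemma cube_le (k : ℕ) : ((k+6)*(k+5)*(k+4) : ℕ) ≤ 2 ^ (k + 7) := by
  induction k with
  | zero => norm_num
  | succ n ih =>
      have h2 : ((n+7)*(n+6)*(n+5) : ℕ) ≤ 2 * ((n+6)*(n+5)*(n+4)) := by
        nlinarith [Nat.zero_le (n*n*n), Nat.zero_le (n*n), Nat.zero_le n]
      calc ((n+1+6)*(n+1+5)*(n+1+4) : ℕ) = (n+7)*(n+6)*(n+5) := by ring
        _ ≤ 2 * ((n+6)*(n+5)*(n+4)) := h2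
        _ ≤ 2 * 2 ^ (n+7) := by omega
        _ = 2 ^ (n+1+7) := by ring

lemma d_pos (j : ℕ) (hj : 6 ≤ j) : 0 < d j := by
  obtain ⟨k, rfl⟩ := Nat.exists_eq_add_of_le hj
  have h : (((k+6)*(k+5)*(k+4) : ℕ) : ℝ) ≤ ((2 ^ (k + 7) : ℕ) : ℝ) := by
    exact_mod_cast cube_le k
  push_cast at h
  have hk : (0:ℝ) ≤ (k : ℝ) := Nat.cast_nonneg k
  unfold d
  have he : 6 + k + 1 = k + 7 := by omega
  rw [he]
  push_cast
  nlinarith [mul_le_mul_of_nonneg_right h (by positivity : (0:ℝ) ≤ (k:ℝ) + 4),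
    mul_nonneg (mul_nonneg hk hk) hk, mul_nonneg hk hk]

/-- For every real `λ`, `D(λ) = Σ_{j=6}^∞ (d_j / j!) λ^j`, and `d_j > 0` for every `j ≥ 6`. -/
theorem D_series :
    (∀ lam : ℝ,
      D lam = ∑' j : ℕ, d (j + 6) / (Nat.factorial (j + 6) : ℝ) * lam ^ (j + 6)) ∧
      ∀ j : ℕ, 6 ≤ j → 0 < d j := by
  refine ⟨fun lam => ?_, d_pos⟩
  set f : ℕ → ℝ := fun n => d n / (Nat.factorial n : ℝ) * lam ^ n with hf
  have hsum6 : ∑ i ∈ Finset.range 6, f i = 4 + 4 * lam := by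
    simp [hf, Finset.sum_range_succ, d, Nat.factorial]
    ring
  have hD : HasSum f (D lam + ∑ i ∈ Finset.range 6, f i) := by
    rw [hsum6]
    convert main_hasSum lam using 1
    unfold D
    ring
  have := (hasSum_nat_add_iff (f := f) 6).mpr hD
  exact this.tsum_eq.symm
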